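/- Let k ≥ 2 and let A, B be d×d complex matrices such that A + B·ζ_{2^k} is unitary. Then A†A + B†B = I and A†B + B†A·conj(ζ_{2^{k-1}}) = 0. -/

import Mathlib

open Matrix

noncomputable def zeta (k : ℕ) : ℂ := Complex.exp (2 * Real.pi * Complex.I / 2 ^ k)

/-- `Z[1/2, ζ_{2^k}]`, the smallest subring of `ℂ` containing `1/2` and `ζ_{2^k}`. -/
noncomputable def Dz (k : ℕ) : Subring ℂ := Subring.closure {1 / 2, zeta k}

open Polynomial

lemma zeta_prim (k : ℕ) : IsPrimitiveRoot (zeta k) (2 ^ k) := by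
  have := Complex.isPrimitiveRoot_exp (2 ^ k) (by positivity)
  simpa [zeta] using this

lemma zeta_sq (k : ℕ) (hk : 1 ≤ k) : zeta (k - 1) = zeta k ^ 2 := by
  rw [zeta, zeta, sq, ← Complex.exp_add]
  congr 1
  have h2 : (2 : ℂ) ^ k = 2 ^ (k - 1) * 2 := by
    rw [← pow_succ]; congr 1; omega
  have hne : (2 : ℂ) ^ (k-1) ≠ 0 := pow_ne_zero _ two_ne_zero
  field_simp [h2]
  linear_combination h2

lemma zeta_conj_mul (k : ℕ) : starRingEnd ℂ (zeta k) * zeta k = 1 := by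
  rw [zeta, ← Complex.exp_conj, ← Complex.exp_add]
  have : (starRingEnd ℂ) (2 * ↑Real.pi * Complex.I / 2 ^ k) = -(2 * ↑Real.pi * Complex.I / 2 ^ k) := by
    simp [map_div₀, Complex.conj_I, map_ofNat]
    ring
  rw [this, neg_add_cancel, Complex.exp_zero]

lemma zeta_not_mem (k : ℕ) (hk : 2 ≤ k) :
    zeta k ∉ IntermediateField.adjoin ℚ {zeta (k - 1)} := by
  intro hmem
  have h1 : IntermediateField.adjoin ℚ {zeta k} = IntermediateField.adjoin ℚ {zeta (k-1)} := by
    apply le_antisymm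
    · rw [IntermediateField.adjoin_le_iff]
      simpa using hmem
    · rw [IntermediateField.adjoin_le_iff]
      intro x hx
      simp only [Set.mem_singleton_iff] at hx
      subst hx
      rw [zeta_sq k (by omega)]
      exact pow_mem (IntermediateField.mem_adjoin_simple_self ℚ (zeta k)) 2
  have deg : ∀ m : ℕ, Module.finrank ℚ (IntermediateField.adjoin ℚ {zeta m}) = Nat.totient (2 ^ m) := by
    intro m
    have prim := zeta_prim m
    have hint : IsIntegral ℚ (zeta m) := (prim.isIntegral (by positivity)).tower_top
    rw [IntermediateField.adjoin.finrank hint, ← cyclotomic_eq_minpoly_rat prim (by positivity),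
      natDegree_cyclotomic]
  have := deg k
  rw [h1, deg (k-1)] at this
  rw [Nat.totient_prime_pow Nat.prime_two (by omega), Nat.totient_prime_pow Nat.prime_two (by omega)] at this
  norm_num at this
  omega

theorem stmt_7 (k : ℕ) (hk : 2 ≤ k) (d : ℕ) (A B : Matrix (Fin d) (Fin d) ℂ)
    (hA : ∀ i j, A i j ∈ Dz (k - 1)) (hB : ∀ i j, B i j ∈ Dz (k - 1))
    (hU : (A + zeta k • B) ∈ Matrix.unitaryGroup (Fin d) ℂ) :
    Aᴴ * A + Bᴴ * B = 1 ∧ Aᴴ * B + starRingEnd ℂ (zeta (k - 1)) • (Bᴴ * A) = 0 := by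
  set ζ := zeta k with hζ
  have hzsq : zeta (k - 1) = ζ ^ 2 := zeta_sq k (by omega)
  set F := IntermediateField.adjoin ℚ {zeta (k - 1)} with hF
  have hζF : zeta (k - 1) ∈ F := IntermediateField.mem_adjoin_simple_self ℚ _
  have hhalf : (1 / 2 : ℂ) ∈ F := by
    have := F.algebraMap_mem (1 / 2 : ℚ)
    simpa using this
  have hconjζ : starRingEnd ℂ (zeta (k - 1)) ∈ F := by
    have h1 : starRingEnd ℂ (zeta (k - 1)) = (zeta (k - 1))⁻¹ :=
      eq_inv_of_mul_eq_one_left (zeta_conj_mul (k - 1))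
    rw [h1]; exact inv_mem hζF
  have hD : ∀ x ∈ Dz (k - 1), x ∈ F ∧ starRingEnd ℂ x ∈ F := by
    intro x hx
    have hle : Dz (k - 1) ≤ F.toSubring ⊓ (F.toSubring.comap (starRingEnd ℂ)) := by
      apply Subring.closure_le.2
      rintro y (rfl | rfl)
      · refine ⟨hhalf, ?_⟩
        have he : starRingEnd ℂ (1 / 2 : ℂ) = 1 / 2 := by
          rw [map_div₀, _root_.map_one, map_ofNat]
        show starRingEnd ℂ (1 / 2 : ℂ) ∈ F.toSubring
        rw [he]; exact hhalf
      · exact ⟨hζF, hconjζ⟩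
    exact hle hx
  have hU1 : star (A + ζ • B) * (A + ζ • B) = 1 := hU.1
  rw [Matrix.star_eq_conjTranspose] at hU1
  have expand : (A + ζ • B)ᴴ * (A + ζ • B)
      = Aᴴ * A + Bᴴ * B + ζ • (Aᴴ * B) + star ζ • (Bᴴ * A) := by
    rw [conjTranspose_add, conjTranspose_smul, add_mul, mul_add, mul_add,
        smul_mul_assoc, smul_mul_assoc, mul_smul_comm, mul_smul_comm, smul_smul]
    have hz : star ζ * ζ = 1 := zeta_conj_mul k
    rw [hz, one_smul]
    abel
  rw [expand] at hU1
  have key : ∀ i j, ((Aᴴ * A + Bᴴ * B) i j - (1 : Matrix (Fin d) (Fin d) ℂ) i j)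
      + ζ * ((Aᴴ * B) i j + starRingEnd ℂ (zeta (k - 1)) * (Bᴴ * A) i j) = 0 := by
    intro i j
    have h := congrFun (congrFun (congrArg (fun M => M) hU1) i) j
    simp only [Matrix.add_apply, Matrix.smul_apply, smul_eq_mul] at h
    have hz : star ζ * ζ = 1 := zeta_conj_mul k
    rw [hzsq, map_pow, starRingEnd_apply]
    simp only [Matrix.add_apply]
    linear_combination h + star ζ * (Bᴴ * A) i j * hz
  have hXmem : ∀ i j, ((Aᴴ * A + Bᴴ * B) i j - (1 : Matrix (Fin d) (Fin d) ℂ) i j) ∈ F := by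
    intro i j
    apply sub_mem
    · simp only [Matrix.add_apply, Matrix.mul_apply, conjTranspose_apply, starRingEnd_apply]
      exact add_mem
        (sum_mem fun l _ => mul_mem (hD _ (hA l i)).2 (hD _ (hA l j)).1)
        (sum_mem fun l _ => mul_mem (hD _ (hB l i)).2 (hD _ (hB l j)).1)
    · rw [Matrix.one_apply]
      split
      · exact one_mem F
      · exact zero_mem F
  have hYmem : ∀ i j, ((Aᴴ * B) i j + starRingEnd ℂ (zeta (k - 1)) * (Bᴴ * A) i j) ∈ F := by
    intro i j
    simp only [Matrix.mul_apply, conjTranspose_apply]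
    refine add_mem ?_ (mul_mem hconjζ ?_)
    · exact sum_mem fun l _ => mul_mem (hD _ (hA l i)).2 (hD _ (hB l j)).1
    · exact sum_mem fun l _ => mul_mem (hD _ (hB l i)).2 (hD _ (hA l j)).1
  have main : ∀ i j, ((Aᴴ * B) i j + starRingEnd ℂ (zeta (k - 1)) * (Bᴴ * A) i j) = 0 ∧
      ((Aᴴ * A + Bᴴ * B) i j - (1 : Matrix (Fin d) (Fin d) ℂ) i j) = 0 := by
    intro i j
    have hk0 := key i j
    by_cases hy : (Aᴴ * B) i j + starRingEnd ℂ (zeta (k - 1)) * (Bᴴ * A) i j = 0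
    · refine ⟨hy, ?_⟩
      rw [hy, mul_zero, add_zero] at hk0
      exact hk0
    · exfalso
      apply zeta_not_mem k hk
      have hz : ζ = (-((Aᴴ * A + Bᴴ * B) i j - (1 : Matrix (Fin d) (Fin d) ℂ) i j)) *
          ((Aᴴ * B) i j + starRingEnd ℂ (zeta (k - 1)) * (Bᴴ * A) i j)⁻¹ := by
        rw [eq_mul_inv_iff_mul_eq₀ hy]
        linear_combination hk0
      rw [hζ] at hz
      rw [hz]
      exact mul_mem (neg_mem (hXmem i j)) (inv_mem (hYmem i j))
  constructor
  · ext i j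
    have := (main i j).2
    exact sub_eq_zero.mp this
  · ext i j
    have := (main i j).1
    simpa [Matrix.add_apply, Matrix.smul_apply, smul_eq_mul] using this
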